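/- arXiv:2009.01461 — 4 statements merged into one kernel-verified Lean document; each statement's English description precedes it below -/
import Mathlib

section
/- Let n ≥ 1 and k ≥ 1 be natural numbers. Let f : ℝ^n → ℝ be continuously differentiable with support contained in [-1,1]^n. Then for every x ∈ [-1,1]^n, the error of the quasi-interpolant satisfies |f(x) - Σ_{i ∈ Z_k^n} f(i/k) · g_n(k·x - i)| ≤ (max_{j=1,…,n} ‖∂_{x_j} f‖_∞) · n/(2k), where the sum runs over all integer vectors i = (i_1,…,i_n) with each |i_j| ≤ k, i/k denotes the point (i_1/k,…,i_n/k), and ‖·‖_∞ denotes the supremum norm over ℝ^n. -/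
/-!
The tent functions `g₁(· - a)`, `a ∈ ℤ`, form a partition of unity on `[-k, k]`, so the
quasi-interpolant reproduces constants and the error at `x` is the `gₙ(kx - i)`-weighted mean of
`f x - f (i / k)`. By the mean value theorem each difference is at most
`C / k · ∑ⱼ |k xⱼ - iⱼ|`, and since `gₙ` is a product the weighted mean of `|k xⱼ - iⱼ|` is a
one-dimensional sum: with `s` the distance from `k xⱼ` to the integer below it, it equals
`s (1 - s) + (1 - s) s ≤ 1 / 2`.
-/

/-- The tent function `g₁(x) = max{1 - |x|, 0}`. -/
noncomputable def g1 (x : ℝ) : ℝ := max (1 - |x|) 0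

/-- The product tent function `gₙ(x) = ∏ⱼ g₁(xⱼ)`. -/
noncomputable def gn {n : ℕ} (x : Fin n → ℝ) : ℝ := ∏ j, g1 (x j)

open Finset

lemma abs_apply_le_mul_sum_abs {ι : Type*} [Fintype ι] [DecidableEq ι] (L : (ι → ℝ) →L[ℝ] ℝ)
    {C : ℝ} (hC : ∀ j, |L (Pi.single j 1)| ≤ C) (v : ι → ℝ) : |L v| ≤ C * ∑ j, |v j| := by
  have hL : L v = ∑ j, v j * L (Pi.single j 1) := by
    conv_lhs => rw [← univ_sum_single v, map_sum]
    refine sum_congr rfl fun j _ => ?_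
    rw [← smul_eq_mul, ← map_smul, ← Pi.single_smul', smul_eq_mul, mul_one]
  calc |L v| ≤ ∑ j, |v j * L (Pi.single j 1)| := hL ▸ abs_sum_le_sum_abs _ _
    _ ≤ ∑ j, |v j| * C := sum_le_sum fun j _ => by
        rw [abs_mul]; exact mul_le_mul_of_nonneg_left (hC j) (abs_nonneg _)
    _ = C * ∑ j, |v j| := by rw [← sum_mul, mul_comm]

lemma abs_sub_le_of_abs_fderiv_apply_le {E : Type*} [NormedAddCommGroup E] [NormedSpace ℝ E]
    {f : E → ℝ} (hf : Differentiable ℝ f) {x y : E} {B : ℝ}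
    (hB : ∀ z, |fderiv ℝ f z (x - y)| ≤ B) : |f x - f y| ≤ B := by
  have hderiv : ∀ t : ℝ, HasDerivAt (fun s : ℝ => f (y + s • (x - y)))
      (fderiv ℝ f (y + t • (x - y)) (x - y)) t := fun t =>
    (hf _).hasFDerivAt.comp_hasDerivAt t
      (by simpa using ((hasDerivAt_id t).smul_const (x - y)).const_add y)
  simpa using norm_image_sub_le_of_norm_deriv_le_segment_01'
    (fun t _ => (hderiv t).hasDerivWithinAt) (fun t _ => hB _)

lemma abs_sub_le_mul_sum_abs_sub_of_abs_fderiv_single_le {ι : Type*} [Fintype ι]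
    [DecidableEq ι] {f : (ι → ℝ) → ℝ} (hf : Differentiable ℝ f) {C : ℝ}
    (hC : ∀ j z, |fderiv ℝ f z (Pi.single j 1)| ≤ C) (x y : ι → ℝ) :
    |f x - f y| ≤ C * ∑ j, |x j - y j| :=
  abs_sub_le_of_abs_fderiv_apply_le hf fun z => abs_apply_le_mul_sum_abs _ (hC · z) _

lemma sum_piFinset_mul_prod {ι α R : Type*} [Fintype ι] [DecidableEq ι] [CommSemiring R]
    (S : ι → Finset α) (g : ι → α → R) (j : ι) (w : α → R) :
    ∑ i ∈ Fintype.piFinset S, w (i j) * ∏ l, g l (i l)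
      = (∑ a ∈ S j, w a * g j a) * ∏ l ∈ univ.erase j, ∑ a ∈ S l, g l a := by
  set H := Function.update g j fun a => w a * g j a
  have hH : ∀ l ∈ univ.erase j, H l = g l := fun l hl =>
    Function.update_of_ne (ne_of_mem_erase hl) _ _
  have hprod : ∀ i : ι → α, ∏ l, H l (i l) = w (i j) * ∏ l, g l (i l) := by
    intro i
    rw [← mul_prod_erase univ (fun l => H l (i l)) (mem_univ j),
      ← mul_prod_erase univ (fun l => g l (i l)) (mem_univ j), ← mul_assoc,
      prod_congr rfl fun l hl => congrFun (hH l hl) (i l)]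
    simp [H]
  rw [sum_congr rfl fun i _ => (hprod i).symm, ← prod_univ_sum,
    ← mul_prod_erase univ (fun l => ∑ a ∈ S l, H l a) (mem_univ j),
    prod_congr rfl fun l hl => by rw [hH l hl]]
  simp [H]

lemma sum_comp_sub_eq_add_of_mem_Icc {s : Finset ℤ} {m : ℤ} (hm : m ∈ s) (hm' : m + 1 ∈ s)
    {t : ℝ} (ht : t ∈ Set.Icc (m : ℝ) (m + 1)) {φ : ℝ → ℝ} (hφ : ∀ u, 1 ≤ |u| → φ u = 0) :
    ∑ a ∈ s, φ (t - a) = φ (t - m) + φ (t - m - 1) := by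
  rw [sum_eq_add_of_mem m (m + 1) hm hm' (by omega), Int.cast_add, Int.cast_one,
    sub_add_eq_sub_sub]
  rintro a - ⟨ham, ham'⟩
  apply hφ
  obtain ⟨h0, h1⟩ := ht
  rcases (show a ≤ m - 1 ∨ m + 2 ≤ a by omega) with h | h
  · have : (a : ℝ) ≤ m - 1 := by exact_mod_cast h
    exact le_abs.2 (Or.inl (by linarith))
  · have : (m : ℝ) + 2 ≤ a := by exact_mod_cast h
    exact le_abs.2 (Or.inr (by linarith))

lemma exists_int_mem_Icc_of_abs_le {k : ℕ} (hk : 1 ≤ k) {t : ℝ} (ht : |t| ≤ k) :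
    ∃ m : ℤ, m ∈ Icc (-(k : ℤ)) k ∧ m + 1 ∈ Icc (-(k : ℤ)) k ∧ t ∈ Set.Icc (m : ℝ) (m + 1) := by
  obtain ⟨htl, htu⟩ := abs_le.1 ht
  have hfl : -(k : ℤ) ≤ ⌊t⌋ := Int.le_floor.2 (by push_cast; linarith)
  rcases lt_or_eq_of_le htu with htk | rfl
  · have hfk : ⌊t⌋ < k := Int.floor_lt.2 (by exact_mod_cast htk)
    exact ⟨⌊t⌋, mem_Icc.2 ⟨hfl, hfk.le⟩, mem_Icc.2 ⟨by omega, hfk⟩,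
      Int.floor_le t, (Int.lt_floor_add_one t).le⟩
  · -- at `t = k` the floor is `k`, whose successor leaves the grid
    exact ⟨k - 1, mem_Icc.2 ⟨by omega, by omega⟩, mem_Icc.2 ⟨by omega, by omega⟩,
      by push_cast; simp⟩

lemma g1_nonneg (x : ℝ) : 0 ≤ g1 x := le_max_right _ _

lemma g1_eq_zero_of_one_le_abs {x : ℝ} (h : 1 ≤ |x|) : g1 x = 0 := max_eq_right (by linarith)

lemma g1_of_mem_Icc {s : ℝ} (hs : s ∈ Set.Icc (0 : ℝ) 1) : g1 s = 1 - s := by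
  rw [g1, abs_of_nonneg hs.1]
  exact max_eq_left (by linarith [hs.2])

lemma g1_sub_one_of_mem_Icc {s : ℝ} (hs : s ∈ Set.Icc (0 : ℝ) 1) : g1 (s - 1) = s := by
  rw [g1, abs_of_nonpos (by linarith [hs.2]), max_eq_left (by linarith [hs.1])]
  ring

section OneDim

variable {k : ℕ} {t : ℝ}

lemma sum_g1_sub_eq_one (hk : 1 ≤ k) (ht : |t| ≤ k) :
    ∑ a ∈ Icc (-(k : ℤ)) k, g1 (t - a) = 1 := by
  obtain ⟨m, hm, hm', htm⟩ := exists_int_mem_Icc_of_abs_le hk ht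
  have hs : t - m ∈ Set.Icc (0 : ℝ) 1 := ⟨by linarith [htm.1], by linarith [htm.2]⟩
  rw [sum_comp_sub_eq_add_of_mem_Icc hm hm' htm fun _ => g1_eq_zero_of_one_le_abs,
    g1_of_mem_Icc hs, g1_sub_one_of_mem_Icc hs]
  ring

lemma sum_g1_sub_mul_abs_le (hk : 1 ≤ k) (ht : |t| ≤ k) :
    ∑ a ∈ Icc (-(k : ℤ)) k, g1 (t - a) * |t - a| ≤ 1 / 2 := by
  obtain ⟨m, hm, hm', htm⟩ := exists_int_mem_Icc_of_abs_le hk ht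
  have hs : t - m ∈ Set.Icc (0 : ℝ) 1 := ⟨by linarith [htm.1], by linarith [htm.2]⟩
  rw [sum_comp_sub_eq_add_of_mem_Icc (φ := fun u => g1 u * |u|) hm hm' htm
      fun u hu => by rw [g1_eq_zero_of_one_le_abs hu, zero_mul],
    g1_of_mem_Icc hs, g1_sub_one_of_mem_Icc hs, abs_of_nonneg hs.1,
    abs_of_nonpos (by linarith [hs.2])]
  nlinarith [sq_nonneg (t - m - 1 / 2)]

end OneDim

lemma gn_nonneg {n : ℕ} (x : Fin n → ℝ) : 0 ≤ gn x := prod_nonneg fun j _ => g1_nonneg (x j)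

lemma abs_natCast_mul_le {k : ℕ} {x : ℝ} (hx : |x| ≤ 1) : |k * x| ≤ k := by
  rw [abs_mul, Nat.abs_cast]
  exact mul_le_of_le_one_right k.cast_nonneg hx

section MultiDim

variable {n k : ℕ} {t : Fin n → ℝ}

lemma sum_gn_sub_eq_one (hk : 1 ≤ k) (ht : ∀ j, |t j| ≤ k) :
    ∑ i ∈ Fintype.piFinset (fun _ : Fin n => Icc (-(k : ℤ)) k), gn (fun j => t j - i j) = 1 := by
  simp only [gn]
  rw [← prod_univ_sum (fun _ => Icc (-(k : ℤ)) k) fun j a => g1 (t j - a)]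
  exact prod_eq_one fun j _ => sum_g1_sub_eq_one hk (ht j)

lemma sum_abs_sub_mul_gn_sub_le (hk : 1 ≤ k) (ht : ∀ j, |t j| ≤ k) (j : Fin n) :
    ∑ i ∈ Fintype.piFinset (fun _ : Fin n => Icc (-(k : ℤ)) k),
      |t j - i j| * gn (fun l => t l - i l) ≤ 1 / 2 := by
  simp only [gn]
  refine (sum_piFinset_mul_prod _ (fun l (a : ℤ) => g1 (t l - a)) j
    fun a => |t j - a|).trans_le ?_
  rw [prod_eq_one fun l _ => sum_g1_sub_eq_one hk (ht l), mul_one]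
  simpa only [mul_comm] using sum_g1_sub_mul_abs_le hk (ht j)

lemma sum_abs_sub_div_mul_gn_le (hk : 1 ≤ k) {x : Fin n → ℝ} (hx : ∀ j, |x j| ≤ 1) (j : Fin n) :
    ∑ i ∈ Fintype.piFinset (fun _ : Fin n => Icc (-(k : ℤ)) k),
      |x j - i j / k| * gn (fun l => k * x l - i l) ≤ 1 / (2 * k) := by
  have hkpos : (0 : ℝ) < k := by exact_mod_cast hk
  have hscale : ∀ i : Fin n → ℤ, |x j - i j / k| = |k * x j - i j| / k := fun i => by
    rw [← abs_of_pos hkpos, ← abs_div, abs_of_pos hkpos]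
    field_simp
  simp only [hscale, div_mul_eq_mul_div, ← sum_div]
  calc _ ≤ 1 / 2 / (k : ℝ) :=
        div_le_div_of_nonneg_right
          (sum_abs_sub_mul_gn_sub_le hk (abs_natCast_mul_le <| hx ·) j) hkpos.le
    _ = 1 / (2 * k) := by ring

end MultiDim

theorem quasi_interpolation_error_general (n k : ℕ) (hk : 1 ≤ k)
    (f : (Fin n → ℝ) → ℝ) (hf : ContDiff ℝ 1 f)
    (C : ℝ)
    (hC : ∀ (j : Fin n) (x : Fin n → ℝ), |fderiv ℝ f x (Pi.single j 1)| ≤ C)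
    (x : Fin n → ℝ) (hx : x ∈ Set.Icc (fun _ => (-1 : ℝ)) (fun _ => 1)) :
    |f x - ∑ i ∈ Fintype.piFinset (fun _ : Fin n => Finset.Icc (-(k : ℤ)) k),
        f (fun j => (i j : ℝ) / k) * gn (fun j => k * x j - i j)|
      ≤ C * n / (2 * k) := by
  set S := Fintype.piFinset (fun _ : Fin n => Icc (-(k : ℤ)) k)
  have hx' : ∀ j, |x j| ≤ 1 := fun j => abs_le.2 ⟨hx.1 j, hx.2 j⟩
  have hunity : ∑ i ∈ S, gn (fun j => k * x j - i j) = 1 :=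
    sum_gn_sub_eq_one hk (abs_natCast_mul_le <| hx' ·)
  calc _ = |∑ i ∈ S, (f x - f (fun j => (i j : ℝ) / k)) * gn (fun j => k * x j - i j)| := by
        simp only [sub_mul, sum_sub_distrib, ← mul_sum, hunity, mul_one]
    _ ≤ ∑ i ∈ S, (C * ∑ j, |x j - i j / k|) * gn (fun j => k * x j - i j) := by
        refine (abs_sum_le_sum_abs _ _).trans (sum_le_sum fun i _ => ?_)
        rw [abs_mul, abs_of_nonneg (gn_nonneg _)]
        exact mul_le_mul_of_nonneg_right (abs_sub_le_mul_sum_abs_sub_of_abs_fderiv_single_le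
          (hf.differentiable one_ne_zero) hC x _) (gn_nonneg _)
    _ = ∑ j, C * ∑ i ∈ S, |x j - i j / k| * gn (fun l => k * x l - i l) := by
        simp only [mul_sum, sum_mul, mul_assoc]
        exact sum_comm
    _ ≤ ∑ j : Fin n, C * (1 / (2 * k)) := sum_le_sum fun j _ =>
        mul_le_mul_of_nonneg_left (sum_abs_sub_div_mul_gn_le hk hx' j)
          ((abs_nonneg _).trans (hC j 0))
    _ = C * n / (2 * k) := by
        rw [sum_const, card_univ, Fintype.card_fin, nsmul_eq_mul]
        field_simp

/-- **Theorem 1.** Quasi-interpolation error estimate: if `f` is `C¹` with support in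
`[-1,1]ⁿ` and `C` bounds all partial derivatives `∂ⱼ f` (so that the best such `C` is
`max_j ‖∂ⱼ f‖_∞`), then for `x ∈ [-1,1]ⁿ`,
`|f(x) - ∑_{i ∈ Z_kⁿ} f(i/k) gₙ(kx - i)| ≤ C · n / (2k)`. -/
theorem quasi_interpolation_error (n k : ℕ) (hn : 1 ≤ n) (hk : 1 ≤ k)
    (f : (Fin n → ℝ) → ℝ) (hf : ContDiff ℝ 1 f)
    (hsupp : Function.support f ⊆ Set.Icc (fun _ => (-1 : ℝ)) (fun _ => 1))
    (C : ℝ)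
    (hC : ∀ (j : Fin n) (x : Fin n → ℝ), |fderiv ℝ f x (Pi.single j 1)| ≤ C)
    (x : Fin n → ℝ) (hx : x ∈ Set.Icc (fun _ => (-1 : ℝ)) (fun _ => 1)) :
    |f x - ∑ i ∈ Fintype.piFinset (fun _ : Fin n => Finset.Icc (-(k : ℤ)) k),
        f (fun j => (i j : ℝ) / k) * gn (fun j => k * x j - i j)|
      ≤ C * n / (2 * k) :=
  quasi_interpolation_error_general n k hk f hf C hC x hx
end

section
/- Let n ≥ 1 and k ≥ 1 be natural numbers. For every x = (x_1,…,x_n) ∈ [-1,1]^n, Σ_{i ∈ Z_k^n} Σ_{j=1}^n |i_j/k - x_j| · g_n(k·x - i) ≤ n/(2k), where the outer sum runs over all integer vectors i = (i_1,…,i_n) with each |i_j| ≤ k. -/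
/-!
The sum factorises coordinatewise. For `y ∈ ℝ` only the two nodes `⌊y⌋` and `⌊y⌋ + 1` see a
nonzero tent `g₁(y - m)`, with weights `1 - t` and `t` where `t = fract y`. Hence
`∑ₘ g₁(y - m) ≤ 1`, and `∑ₘ |m - y| g₁(y - m) ≤ t(1 - t) + (1 - t)t ≤ 1/2`. For the `j`-th term
of the inner sum the multi-index sum is the product over coordinates of these one-dimensional
sums: the `j`-th factor is at most `1/(2k)` after rescaling by `k`, the others at most `1`.
-/

open Finset

lemma g1_sub_int_eq_zero {y : ℝ} {m : ℤ} (h₀ : m ≠ ⌊y⌋) (h₁ : m ≠ ⌊y⌋ + 1) :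
    g1 (y - m) = 0 := by
  apply g1_eq_zero_of_one_le_abs
  have hlo : (⌊y⌋ : ℝ) ≤ y := Int.floor_le y
  have hhi : y < ⌊y⌋ + 1 := Int.lt_floor_add_one y
  rcases (by omega : m ≤ ⌊y⌋ - 1 ∨ ⌊y⌋ + 2 ≤ m) with h | h
  · have : (m : ℝ) ≤ ⌊y⌋ - 1 := by exact_mod_cast h
    rw [abs_of_nonneg (by linarith)]; linarith
  · have : (⌊y⌋ : ℝ) + 2 ≤ m := by exact_mod_cast h
    rw [abs_of_nonpos (by linarith)]; linarith

lemma g1_sub_floor (y : ℝ) : g1 (y - ⌊y⌋) = 1 - Int.fract y := by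
  rw [← Int.fract, g1, abs_of_nonneg (Int.fract_nonneg y)]
  exact max_eq_left (by linarith [Int.fract_lt_one y])

lemma g1_sub_floor_add_one (y : ℝ) : g1 (y - ↑(⌊y⌋ + 1)) = Int.fract y := by
  have : y - ↑(⌊y⌋ + 1) = Int.fract y - 1 := by push_cast [Int.fract]; ring
  rw [this, g1, abs_of_nonpos (by linarith [Int.fract_lt_one y])]
  rw [max_eq_left (by linarith [Int.fract_nonneg y])]
  ring

lemma sum_le_add_of_support_subset_pair (s : Finset ℤ) {f : ℤ → ℝ} (a : ℤ)
    (hf : ∀ m, m ≠ a → m ≠ a + 1 → f m = 0) (hf₀ : ∀ m, 0 ≤ f m) :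
    ∑ m ∈ s, f m ≤ f a + f (a + 1) := by
  classical
  calc ∑ m ∈ s, f m = ∑ m ∈ s with m ∈ ({a, a + 1} : Finset ℤ), f m := by
        refine (sum_filter_of_ne fun m _ hm => ?_).symm
        simp only [mem_insert, mem_singleton]
        by_contra! h
        exact hm (hf m h.1 h.2)
    _ ≤ ∑ m ∈ ({a, a + 1} : Finset ℤ), f m :=
        sum_le_sum_of_subset_of_nonneg (fun m hm => (mem_filter.1 hm).2) fun m _ _ => hf₀ m
    _ = f a + f (a + 1) := sum_pair (by omega)

lemma sum_g1_sub_le_one (s : Finset ℤ) (y : ℝ) : ∑ m ∈ s, g1 (y - m) ≤ 1 := by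
  refine (sum_le_add_of_support_subset_pair s ⌊y⌋ (fun m h₀ h₁ => g1_sub_int_eq_zero h₀ h₁)
    fun m => g1_nonneg _).trans_eq ?_
  rw [g1_sub_floor, g1_sub_floor_add_one]
  ring

lemma sum_abs_sub_mul_g1_sub_le (s : Finset ℤ) (y : ℝ) :
    ∑ m ∈ s, |(m : ℝ) - y| * g1 (y - m) ≤ 1 / 2 := by
  refine (sum_le_add_of_support_subset_pair s ⌊y⌋
    (fun m h₀ h₁ => by rw [g1_sub_int_eq_zero h₀ h₁, mul_zero])
    fun m => mul_nonneg (abs_nonneg _) (g1_nonneg _)).trans ?_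
  have hfloor : |(⌊y⌋ : ℝ) - y| = Int.fract y := by
    rw [abs_sub_comm, ← Int.fract, abs_of_nonneg (Int.fract_nonneg y)]
  have hceil : |((⌊y⌋ + 1 : ℤ) : ℝ) - y| = 1 - Int.fract y := by
    rw [show ((⌊y⌋ + 1 : ℤ) : ℝ) - y = 1 - Int.fract y by push_cast [Int.fract]; ring]
    exact abs_of_nonneg (by linarith [Int.fract_lt_one y])
  rw [hfloor, hceil, g1_sub_floor, g1_sub_floor_add_one]
  nlinarith [sq_nonneg (2 * Int.fract y - 1)]

lemma sum_abs_div_sub_mul_g1_le {k : ℝ} (hk : 0 < k) (s : Finset ℤ) (x : ℝ) :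
    ∑ m ∈ s, |(m : ℝ) / k - x| * g1 (k * x - m) ≤ 1 / (2 * k) := by
  have hrescale : ∀ m : ℤ, |(m : ℝ) / k - x| = |(m : ℝ) - k * x| / k := fun m => by
    rw [← abs_of_pos hk, ← abs_div, abs_of_pos hk, sub_div, mul_div_cancel_left₀ x hk.ne']
  simp_rw [hrescale, div_mul_eq_mul_div, ← sum_div]
  rw [← div_div]
  exact div_le_div_of_nonneg_right (sum_abs_sub_mul_g1_sub_le s (k * x)) hk.le

lemma sum_piFinset_prod_le {ι α : Type*} [Fintype ι] [DecidableEq ι] (s : ι → Finset α)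
    (f : ι → α → ℝ) (c : ι → ℝ) (hf : ∀ j, ∀ a ∈ s j, 0 ≤ f j a)
    (hc : ∀ j, ∑ a ∈ s j, f j a ≤ c j) :
    ∑ i ∈ Fintype.piFinset s, ∏ j, f j (i j) ≤ ∏ j, c j := by
  rw [← prod_univ_sum]
  exact prod_le_prod (fun j _ => sum_nonneg (hf j)) fun j _ => hc j

lemma sum_piFinset_abs_div_sub_mul_gn_le {n : ℕ} {k : ℝ} (hk : 0 < k) (s : Fin n → Finset ℤ)
    (x : Fin n → ℝ) (j : Fin n) :
    ∑ i ∈ Fintype.piFinset s, |(i j : ℝ) / k - x j| * gn (fun j' => k * x j' - i j')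
      ≤ 1 / (2 * k) := by
  classical
  set w : Fin n → ℤ → ℝ := fun j' m => if j' = j then |(m : ℝ) / k - x j| else 1
  have hsplit : ∀ i : Fin n → ℤ, |(i j : ℝ) / k - x j| * gn (fun j' => k * x j' - i j')
      = ∏ j', w j' (i j') * g1 (k * x j' - i j') := fun i => by
    simp only [w, prod_mul_distrib, prod_ite_eq' univ j, if_pos (mem_univ j), gn]
  calc ∑ i ∈ Fintype.piFinset s, |(i j : ℝ) / k - x j| * gn (fun j' => k * x j' - i j')
      = ∑ i ∈ Fintype.piFinset s, ∏ j', w j' (i j') * g1 (k * x j' - i j') :=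
        sum_congr rfl fun i _ => hsplit i
    _ ≤ ∏ j', if j' = j then 1 / (2 * k) else 1 := by
        refine sum_piFinset_prod_le s (fun j' m => w j' m * g1 (k * x j' - m))
          (fun j' => if j' = j then 1 / (2 * k) else 1) (fun j' m _ => ?_) fun j' => ?_
        · refine mul_nonneg ?_ (g1_nonneg _)
          simp only [w]
          split_ifs <;> positivity
        · by_cases h : j' = j
          · subst h
            simpa [w] using sum_abs_div_sub_mul_g1_le hk (s j') (x j')
          · simpa [w, h] using sum_g1_sub_le_one (s j') (k * x j')
    _ = 1 / (2 * k) := by rw [prod_ite_eq' univ j, if_pos (mem_univ j)]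

theorem gn_moment_estimate_general (n k : ℕ) (hk : 1 ≤ k)
    (x : Fin n → ℝ) :
    ∑ i ∈ Fintype.piFinset (fun _ : Fin n => Finset.Icc (-(k : ℤ)) k),
        ∑ j, |(i j : ℝ) / k - x j| * gn (fun j' => k * x j' - i j')
      ≤ n / (2 * k) := by
  have hk' : (0 : ℝ) < k := by exact_mod_cast hk
  rw [sum_comm]
  calc _ ≤ ∑ _j : Fin n, 1 / (2 * (k : ℝ)) :=
        sum_le_sum fun j _ => sum_piFinset_abs_div_sub_mul_gn_le hk' _ x j
    _ = n / (2 * k) := by rw [sum_const, card_univ, Fintype.card_fin, nsmul_eq_mul, mul_one_div]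

/-- **Lemma 5, equation (II).** For `x ∈ [-1,1]ⁿ`,
`∑_{i ∈ Z_kⁿ} ∑_{j=1}ⁿ |i_j/k - x_j| · gₙ(kx - i) ≤ n / (2k)`. -/
theorem gn_moment_estimate (n k : ℕ) (hn : 1 ≤ n) (hk : 1 ≤ k)
    (x : Fin n → ℝ) (hx : x ∈ Set.Icc (fun _ => (-1 : ℝ)) (fun _ => 1)) :
    ∑ i ∈ Fintype.piFinset (fun _ : Fin n => Finset.Icc (-(k : ℤ)) k),
        ∑ j, |(i j : ℝ) / k - x j| * gn (fun j' => k * x j' - i j')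
      ≤ n / (2 * k) :=
  gn_moment_estimate_general n k hk x
end

section
/- Let k ≥ 1 be a natural number and let f : ℝ → ℝ be continuously differentiable with support contained in [-1,1]. Define the function F : ℝ → ℝ by F(x) = Σ_{i=-k}^{k} f(i/k) · (σ(k·x - i - 1) - 2·σ(k·x - i) + σ(k·x - i + 1)). Then F is exactly realized by a ReLU network with 2 hidden layers of widths 3(2k+1) and 2k+1, and sup_{x ∈ [-1,1]} |f(x) - F(x)| ≤ ‖f'‖_∞ / (2k), where ‖f'‖_∞ is the supremum norm of the derivative of f over ℝ. -/
/-- The ReLU function `σ(x) = max{x, 0}`. -/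
noncomputable def relu (x : ℝ) : ℝ := max x 0

/-- `RealizedByReluNet n₀ ws F` means the scalar-valued function `F : ℝ^{n₀} → ℝ` is exactly
a ReLU network with hidden layers of widths given by the list `ws`:
`F = W_{L+1} ∘ σ ∘ W_L ∘ ⋯ ∘ σ ∘ W_1` with affine maps `W_i` (given by a matrix and a bias
vector) and the ReLU `σ` applied componentwise. -/
def RealizedByReluNet : (n0 : ℕ) → List ℕ → ((Fin n0 → ℝ) → ℝ) → Prop
  | n0, [], F => ∃ (a : Fin n0 → ℝ) (b : ℝ), ∀ x, F x = ∑ j, a j * x j + b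
  | n0, w :: ws, F => ∃ (A : Matrix (Fin w) (Fin n0) ℝ) (b : Fin w → ℝ)
      (G : (Fin w → ℝ) → ℝ), RealizedByReluNet w ws G ∧
      ∀ x, F x = G (fun i => relu (A.mulVec x i + b i))

/-!
The second difference `σ(s - 1) - 2σ(s) + σ(s + 1)` of the ReLU is the hat function
`max (1 - |s|) 0`, so `F` is the piecewise-linear interpolant of `f` at the nodes `i / k`. It is a
network with two hidden layers: the first computes the `3(2k + 1)` units `σ(kx - i + r)`,
`r ∈ {-1, 0, 1}`, the second combines them into the `2k + 1` hats, which are non-negative and so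
pass through the ReLU unchanged. On a cell `[i / k, (i + 1) / k]` with `kx = i + u` the
interpolant is `(1 - u) f(i / k) + u f((i + 1) / k)`; comparing `f x` with both endpoint values by
the mean value theorem bounds the error by `2u(1 - u) C / k ≤ C / (2k)`.
-/

open Finset

lemma relu_of_nonneg {x : ℝ} (hx : 0 ≤ x) : relu x = x := max_eq_left hx

noncomputable def hat (s : ℝ) : ℝ := max (1 - |s|) 0

lemma relu_sub_one_sub_two_mul_relu_add_relu_add_one (s : ℝ) :
    relu (s - 1) - 2 * relu s + relu (s + 1) = hat s := by
  simp only [relu, hat, max_def, abs_eq_max_neg]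
  split_ifs <;> linarith

lemma hat_nonneg (s : ℝ) : 0 ≤ hat s := le_max_right _ _

lemma hat_eq_zero_of_one_le_abs {s : ℝ} (hs : 1 ≤ |s|) : hat s = 0 :=
  max_eq_right (by linarith)

lemma hat_of_mem_Icc {s : ℝ} (h₀ : 0 ≤ s) (h₁ : s ≤ 1) : hat s = 1 - s := by
  rw [hat, abs_of_nonneg h₀, max_eq_left (by linarith)]

lemma hat_sub_one_of_mem_Icc {s : ℝ} (h₀ : 0 ≤ s) (h₁ : s ≤ 1) : hat (s - 1) = s := by
  rw [hat, abs_of_nonpos (by linarith), max_eq_left (by linarith)]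
  ring

lemma realizedByReluNet_sum_mul_hat (n : ℕ) (c : ℝ) (a t : Fin n → ℝ) :
    RealizedByReluNet 1 [3 * n, n] (fun v => ∑ m, a m * hat (c * v 0 - t m)) := by
  -- unit `e (r, m)` of the first layer is `σ(c v₀ - t m + r - 1)`; the second layer
  -- weighs the units `e (0, m)`, `e (1, m)`, `e (2, m)` by `1, -2, 1`
  let e : Fin 3 × Fin n ≃ Fin (3 * n) := finProdFinEquiv
  let A₁ : Matrix (Fin (3 * n)) (Fin 1) ℝ := fun _ _ => c
  let b₁ : Fin (3 * n) → ℝ := fun j => ![-1, 0, 1] (e.symm j).1 - t (e.symm j).2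
  let A₂ : Matrix (Fin n) (Fin (3 * n)) ℝ := fun m j =>
    if (e.symm j).2 = m then ![1, -2, 1] (e.symm j).1 else 0
  refine ⟨A₁, b₁, _, ⟨A₂, 0, _, ⟨a, 0, fun _ => rfl⟩, fun _ => rfl⟩, fun v => ?_⟩
  have hA₁ : ∀ j, A₁.mulVec v j = c * v 0 := by simp [A₁, Matrix.mulVec, dotProduct]
  have hlayer :
      ∀ m, A₂.mulVec (fun j => relu (A₁.mulVec v j + b₁ j)) m = hat (c * v 0 - t m) := by
    intro m
    rw [Matrix.mulVec, dotProduct, ← e.sum_comp, Fintype.sum_prod_type]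
    simp only [A₂, b₁, hA₁, Equiv.symm_apply_apply, ite_mul, zero_mul, sum_ite_eq', mem_univ,
      if_true, Fin.sum_univ_three, Matrix.cons_val_zero, Matrix.cons_val_one, Matrix.cons_val_two,
      Matrix.head_cons, Matrix.tail_cons]
    rw [← relu_sub_one_sub_two_mul_relu_add_relu_add_one]
    ring_nf
  simp only [Pi.zero_apply, add_zero, hlayer, relu_of_nonneg (hat_nonneg _)]

lemma sum_Icc_neg_natCast_eq_sum_fin {M : Type*} [AddCommMonoid M] (k : ℕ) (g : ℤ → M) :
    ∑ i ∈ Icc (-(k : ℤ)) k, g i = ∑ m : Fin (2 * k + 1), g (m - k) := by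
  rw [Fin.sum_univ_eq_sum_range (fun m => g (m - k))]
  refine sum_nbij' (fun i => (i + k).toNat) (fun m => (m : ℤ) - k) ?_ ?_ ?_ ?_ ?_ <;>
    simp only [mem_Icc, mem_range] <;>
    intros <;> first | omega | (congr 1; omega)

lemma exists_int_mem_Ico_le_le_add_one {m n : ℤ} {t : ℝ} (hmn : m < n) (hm : (m : ℝ) ≤ t)
    (hn : t ≤ n) : ∃ i : ℤ, m ≤ i ∧ i < n ∧ (i : ℝ) ≤ t ∧ t ≤ i + 1 := by
  rcases hn.lt_or_eq with hn | rfl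
  · exact ⟨⌊t⌋, Int.le_floor.2 hm, Int.floor_lt.2 hn, Int.floor_le t, (Int.lt_floor_add_one t).le⟩
  · exact ⟨n - 1, by omega, by omega, by push_cast; linarith, by push_cast; linarith⟩

lemma sum_mul_hat_sub_eq {s : Finset ℤ} {i : ℤ} (hi : i ∈ s) (hi' : i + 1 ∈ s) (g : ℤ → ℝ)
    {t : ℝ} (h₀ : (i : ℝ) ≤ t) (h₁ : t ≤ i + 1) :
    ∑ j ∈ s, g j * hat (t - j) = (1 - (t - i)) * g i + (t - i) * g (i + 1) := by
  have hpair : {i, i + 1} ⊆ s := insert_subset hi (singleton_subset_iff.2 hi')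
  have hfar : ∀ j ∈ s, j ∉ ({i, i + 1} : Finset ℤ) → g j * hat (t - j) = 0 := by
    intro j _ hj
    simp only [mem_insert, mem_singleton, not_or] at hj
    rcases lt_or_gt_of_ne hj.1 with hlt | hgt
    · have : (j : ℝ) + 1 ≤ i := by exact_mod_cast hlt
      rw [hat_eq_zero_of_one_le_abs (by rw [abs_of_nonneg (by linarith)]; linarith), mul_zero]
    · have : (i : ℝ) + 2 ≤ j := by exact_mod_cast (by omega : i + 2 ≤ j)
      rw [hat_eq_zero_of_one_le_abs (by rw [abs_of_nonpos (by linarith)]; linarith), mul_zero]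
  rw [← sum_subset hpair hfar, sum_pair (by omega), hat_of_mem_Icc (by linarith) (by linarith),
    Int.cast_add, Int.cast_one, sub_add_eq_sub_sub,
    hat_sub_one_of_mem_Icc (by linarith) (by linarith)]
  ring

lemma abs_sub_linear_interpolation_le {f : ℝ → ℝ} {C : ℝ}
    (hf : ∀ y z, |f y - f z| ≤ C * |y - z|) (a b : ℝ) {u : ℝ} (hu₀ : 0 ≤ u) (hu₁ : u ≤ 1) :
    |f ((1 - u) * a + u * b) - ((1 - u) * f a + u * f b)| ≤ C * |b - a| / 2 := by
  set x := (1 - u) * a + u * b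
  have hxa : |x - a| = u * |b - a| := by
    rw [show x - a = u * (b - a) by ring, abs_mul, abs_of_nonneg hu₀]
  have hxb : |x - b| = (1 - u) * |b - a| := by
    rw [show x - b = -((1 - u) * (b - a)) by ring, abs_neg, abs_mul, abs_of_nonneg (by linarith)]
  have hCba : 0 ≤ C * |b - a| := (abs_nonneg _).trans (hf b a)
  calc |f x - ((1 - u) * f a + u * f b)|
      = |(1 - u) * (f x - f a) + u * (f x - f b)| := by ring_nf
    _ ≤ (1 - u) * |f x - f a| + u * |f x - f b| := by
      refine (abs_add_le _ _).trans_eq ?_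
      rw [abs_mul, abs_mul, abs_of_nonneg (by linarith : 0 ≤ 1 - u), abs_of_nonneg hu₀]
    _ ≤ (1 - u) * (C * (u * |b - a|)) + u * (C * ((1 - u) * |b - a|)) := by
      rw [← hxa, ← hxb]
      gcongr <;> exact hf _ _
    _ = 2 * (u * (1 - u)) * (C * |b - a|) := by ring
    _ ≤ 1 / 2 * (C * |b - a|) := by
      gcongr
      nlinarith [sq_nonneg (2 * u - 1)]
    _ = C * |b - a| / 2 := by ring

lemma abs_sub_le_mul_abs_sub_of_abs_deriv_le {f : ℝ → ℝ} {C : ℝ} (hf : Differentiable ℝ f)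
    (hC : ∀ x, |deriv f x| ≤ C) (y z : ℝ) : |f y - f z| ≤ C * |y - z| := by
  simpa only [Real.norm_eq_abs] using Convex.norm_image_sub_le_of_norm_deriv_le
    (fun x _ => hf x) (fun x _ => hC x) convex_univ (Set.mem_univ z) (Set.mem_univ y)

lemma abs_sub_sum_mul_hat_le {f : ℝ → ℝ} {C : ℝ} (hf : ∀ y z, |f y - f z| ≤ C * |y - z|)
    {k : ℕ} (hk : 1 ≤ k) {x : ℝ} (hx : x ∈ Set.Icc (-1 : ℝ) 1) :
    |f x - ∑ i ∈ Icc (-(k : ℤ)) k, f ((i : ℝ) / k) * hat (k * x - i)| ≤ C / (2 * k) := by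
  have hk₀ : (0 : ℝ) < k := by exact_mod_cast hk
  obtain ⟨i, hi₁, hi₂, hti, hti'⟩ := exists_int_mem_Ico_le_le_add_one (m := -k) (n := k)
    (t := k * x) (by omega) (by push_cast; nlinarith [hx.1]) (by push_cast; nlinarith [hx.2])
  rw [sum_mul_hat_sub_eq (mem_Icc.2 ⟨hi₁, hi₂.le⟩) (mem_Icc.2 ⟨by omega, by omega⟩) _ hti hti']
  have hx_interp :
      x = (1 - (k * x - i)) * ((i : ℤ) / k) + (k * x - i) * (((i + 1 : ℤ) : ℝ) / k) := by
    field_simp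
    push_cast
    ring
  have hgap : |((i + 1 : ℤ) : ℝ) / k - (i : ℤ) / k| = 1 / k := by
    rw [Int.cast_add, Int.cast_one, ← sub_div, add_sub_cancel_left, abs_of_pos (by positivity)]
  calc _ ≤ C * |((i + 1 : ℤ) : ℝ) / k - (i : ℤ) / k| / 2 := by
        have := abs_sub_linear_interpolation_le hf ((i : ℤ) / k) (((i + 1 : ℤ) : ℝ) / k)
          (u := k * x - i) (by linarith) (by linarith)
        rwa [← hx_interp] at this
    _ = C / (2 * k) := by rw [hgap]; ring

theorem one_dimensional_network_approximation_general (k : ℕ) (hk : 1 ≤ k)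
    (f : ℝ → ℝ) (hf : ContDiff ℝ 1 f)
    (C : ℝ) (hC : ∀ x : ℝ, |deriv f x| ≤ C) :
    ∃ F : ℝ → ℝ,
      (∀ x : ℝ, F x = ∑ i ∈ Finset.Icc (-(k : ℤ)) k, f ((i : ℝ) / k) *
        (relu (k * x - i - 1) - 2 * relu (k * x - i) + relu (k * x - i + 1))) ∧
      (∃ G : (Fin 1 → ℝ) → ℝ,
        RealizedByReluNet 1 [3 * (2 * k + 1), 2 * k + 1] G ∧
        ∀ x : ℝ, F x = G (fun _ => x)) ∧
      ∀ x ∈ Set.Icc (-1 : ℝ) 1, |f x - F x| ≤ C / (2 * k) := by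
  have hF : ∀ x : ℝ, ∑ i ∈ Icc (-(k : ℤ)) k, f ((i : ℝ) / k) *
      (relu (k * x - i - 1) - 2 * relu (k * x - i) + relu (k * x - i + 1)) =
      ∑ i ∈ Icc (-(k : ℤ)) k, f ((i : ℝ) / k) * hat (k * x - i) := fun x => by
    simp only [relu_sub_one_sub_two_mul_relu_add_relu_add_one]
  refine ⟨_, fun x => rfl, ⟨_, realizedByReluNet_sum_mul_hat _ k
    (fun m => f (((m - k : ℤ) : ℝ) / k)) (fun m => ((m - k : ℤ) : ℝ)), fun x => ?_⟩, fun x hx => ?_⟩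
  · rw [hF, sum_Icc_neg_natCast_eq_sum_fin]
  · rw [hF]
    exact abs_sub_sum_mul_hat_le
      (abs_sub_le_mul_abs_sub_of_abs_deriv_le (hf.differentiable one_ne_zero) hC) hk hx

/-- **Theorem 2, one-dimensional case.** For `f ∈ C¹(ℝ)` supported in `[-1,1]` and `C` a
bound for `|f'|` (so that the best such `C` is `‖f'‖_∞`), the function
`F(x) = ∑_{i=-k}^k f(i/k)(σ(kx-i-1) - 2σ(kx-i) + σ(kx-i+1))` is exactly realized by a ReLU
network with 2 hidden layers of widths `3(2k+1)` and `2k+1`, and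
`sup_{x ∈ [-1,1]} |f(x) - F(x)| ≤ C/(2k)`. -/
theorem one_dimensional_network_approximation (k : ℕ) (hk : 1 ≤ k)
    (f : ℝ → ℝ) (hf : ContDiff ℝ 1 f)
    (hsupp : Function.support f ⊆ Set.Icc (-1 : ℝ) 1)
    (C : ℝ) (hC : ∀ x : ℝ, |deriv f x| ≤ C) :
    ∃ F : ℝ → ℝ,
      (∀ x : ℝ, F x = ∑ i ∈ Finset.Icc (-(k : ℤ)) k, f ((i : ℝ) / k) *
        (relu (k * x - i - 1) - 2 * relu (k * x - i) + relu (k * x - i + 1))) ∧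
      (∃ G : (Fin 1 → ℝ) → ℝ,
        RealizedByReluNet 1 [3 * (2 * k + 1), 2 * k + 1] G ∧
        ∀ x : ℝ, F x = G (fun _ => x)) ∧
      ∀ x ∈ Set.Icc (-1 : ℝ) 1, |f x - F x| ≤ C / (2 * k) :=
  one_dimensional_network_approximation_general k hk f hf C hC
end

section
/- Let n ≥ 1, k ≥ 1 be natural numbers, let ε ≥ 0, and let f : ℝ^n → ℝ be continuously differentiable with support contained in [-1,1]^n. Suppose that for each integer vector i ∈ Z_k^n a function A_i : ℝ^n → ℝ satisfies |A_i(x) - g_n(k·x - i)| ≤ ε for all x ∈ [0,1]^n. Then for all x ∈ [0,1]^n, |f(x) - Σ_{i ∈ Z_k^n} f(i/k) · A_i(x)| ≤ (max_{j=1,…,n} ‖∂_{x_j} f‖_∞) · n/(2k) + ‖f‖_∞ · (2k+1)^n · ε, where ‖f‖_∞ = sup{|f(x)| : x ∈ ℝ^n}. -/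
open Finset

/-- The only shifts that can lie in `(-1, 1)` are `t - m` and `t - (m + 1)` with
`m = min ⌊t⌋ (k - 1)`. -/
lemma exists_sum_Icc_comp_sub_eq_add {k : ℕ} (hk : 1 ≤ k) {t : ℝ} (ht : t ∈ Set.Icc (0 : ℝ) k)
    (φ : ℝ → ℝ) (hφ : ∀ s, 1 ≤ |s| → φ s = 0) :
    ∃ s ∈ Set.Icc (0 : ℝ) 1, ∑ i ∈ Icc (-(k : ℤ)) k, φ (t - i) = φ s + φ (s - 1) := by
  set m : ℤ := min ⌊t⌋ (k - 1)
  have hm0 : 0 ≤ m := le_min (Int.floor_nonneg.mpr ht.1) (by omega)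
  have hm_le : (m : ℝ) ≤ t := le_trans (by exact_mod_cast min_le_left _ _) (Int.floor_le t)
  have hm_ge : t ≤ m + 1 := by
    rcases le_or_gt ⌊t⌋ (k - 1) with h | h
    · rw [show m = ⌊t⌋ from min_eq_left h]
      exact (Int.lt_floor_add_one t).le
    · rw [show m = k - 1 from min_eq_right h.le]
      push_cast
      linarith [ht.2]
  refine ⟨t - m, ⟨by linarith, by linarith⟩, ?_⟩
  have hpair : ({m, m + 1} : Finset ℤ) ⊆ Icc (-(k : ℤ)) k := by
    intro i hi
    rw [mem_insert, mem_singleton] at hi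
    rw [mem_Icc]
    omega
  rw [← sum_subset hpair, sum_pair (by omega : m ≠ m + 1)]
  · push_cast
    ring_nf
  · intro i _ hi
    rw [mem_insert, mem_singleton, not_or] at hi
    apply hφ
    rcases lt_or_gt_of_ne hi.1 with h | h
    · have : (i : ℝ) ≤ m - 1 := by exact_mod_cast (by omega : i ≤ m - 1)
      rw [abs_of_nonneg (by linarith)]
      linarith
    · have : (m : ℝ) + 2 ≤ i := by exact_mod_cast (by omega : m + 2 ≤ i)
      rw [abs_of_nonpos (by linarith)]
      linarith

lemma sum_g1_sub_int_eq_one {k : ℕ} (hk : 1 ≤ k) {t : ℝ} (ht : t ∈ Set.Icc (0 : ℝ) k) :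
    ∑ i ∈ Icc (-(k : ℤ)) k, g1 (t - i) = 1 := by
  obtain ⟨s, hs, h⟩ := exists_sum_Icc_comp_sub_eq_add hk ht g1 fun _ ↦ g1_eq_zero_of_one_le_abs
  rw [h, g1_of_mem_Icc hs, g1_sub_one_of_mem_Icc hs]
  ring

lemma sum_g1_sub_int_mul_abs_le {k : ℕ} (hk : 1 ≤ k) {t : ℝ} (ht : t ∈ Set.Icc (0 : ℝ) k) :
    ∑ i ∈ Icc (-(k : ℤ)) k, g1 (t - i) * |t - i| ≤ 1 / 2 := by
  obtain ⟨s, hs, h⟩ := exists_sum_Icc_comp_sub_eq_add hk ht (fun u ↦ g1 u * |u|)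
    fun _ hu ↦ by rw [g1_eq_zero_of_one_le_abs hu, zero_mul]
  rw [h, g1_of_mem_Icc hs, g1_sub_one_of_mem_Icc hs, abs_of_nonneg hs.1,
    abs_of_nonpos (by linarith [hs.2])]
  nlinarith [sq_nonneg (2 * s - 1)]

lemma sum_piFinset_prod_mul_apply {ι κ R : Type*} [Fintype ι] [DecidableEq ι] [CommSemiring R]
    (s : ι → Finset κ) (ψ : ι → κ → R) (w : κ → R) (j : ι) :
    ∑ i ∈ Fintype.piFinset s, (∏ l, ψ l (i l)) * w (i j) =
      (∑ m ∈ s j, ψ j m * w m) * ∏ l ∈ univ.erase j, ∑ m ∈ s l, ψ l m := by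
  set ψ' := Function.update ψ j fun m ↦ ψ j m * w m
  have hψ' : ∀ i : ι → κ, (∏ l, ψ l (i l)) * w (i j) = ∏ l, ψ' l (i l) := by
    intro i
    rw [← mul_prod_erase _ _ (mem_univ j), ← mul_prod_erase _ _ (mem_univ j), mul_right_comm]
    congr 1
    · simp only [ψ', Function.update_self]
    · exact prod_congr rfl fun l hl ↦ by simp only [ψ', Function.update_of_ne (ne_of_mem_erase hl)]
  simp_rw [hψ', ← prod_univ_sum, ← mul_prod_erase _ _ (mem_univ j)]
  congr 1
  · simp only [ψ', Function.update_self]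
  · exact prod_congr rfl fun l hl ↦ by simp only [ψ', Function.update_of_ne (ne_of_mem_erase hl)]

lemma natCast_mul_mem_Icc {n k : ℕ} {x : Fin n → ℝ} (hx : x ∈ Set.Icc 0 1) (j : Fin n) :
    (k : ℝ) * x j ∈ Set.Icc (0 : ℝ) k :=
  ⟨mul_nonneg k.cast_nonneg (hx.1 j), mul_le_of_le_one_right k.cast_nonneg (hx.2 j)⟩

lemma sum_gn_eq_one {n k : ℕ} (hk : 1 ≤ k) {x : Fin n → ℝ} (hx : x ∈ Set.Icc 0 1) :
    ∑ i ∈ Fintype.piFinset (fun _ : Fin n ↦ Icc (-(k : ℤ)) k), gn (fun j ↦ k * x j - i j) = 1 := by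
  simp only [gn]
  rw [← prod_univ_sum _ fun l (m : ℤ) ↦ g1 (k * x l - m)]
  exact prod_eq_one fun j _ ↦ sum_g1_sub_int_eq_one hk (natCast_mul_mem_Icc hx j)

lemma sum_gn_mul_abs_sub_le {n k : ℕ} (hk : 1 ≤ k) {x : Fin n → ℝ} (hx : x ∈ Set.Icc 0 1)
    (j : Fin n) :
    ∑ i ∈ Fintype.piFinset (fun _ : Fin n ↦ Icc (-(k : ℤ)) k),
      gn (fun l ↦ k * x l - i l) * |x j - i j / k| ≤ 1 / (2 * k) := by
  have hk0 : (0 : ℝ) < k := by exact_mod_cast hk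
  have hrescale : ∀ m : ℤ, |x j - m / k| = |k * x j - m| / k := fun m ↦ by
    rw [← abs_of_pos hk0, ← abs_div, abs_of_pos hk0, sub_div, mul_div_cancel_left₀ _ hk0.ne']
  simp only [gn]
  rw [sum_piFinset_prod_mul_apply _ (fun l (m : ℤ) ↦ g1 (k * x l - m))
      (fun m : ℤ ↦ |x j - m / k|),
    prod_eq_one fun l _ ↦ sum_g1_sub_int_eq_one hk (natCast_mul_mem_Icc hx l), mul_one]
  calc ∑ m ∈ Icc (-(k : ℤ)) k, g1 (k * x j - m) * |x j - m / k|
      = (∑ m ∈ Icc (-(k : ℤ)) k, g1 (k * x j - m) * |k * x j - m|) / k := by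
        simp only [hrescale, sum_div, mul_div_assoc]
    _ ≤ 1 / 2 / k := by
        gcongr
        exact sum_g1_sub_int_mul_abs_le hk (natCast_mul_mem_Icc hx j)
    _ = 1 / (2 * k) := div_div _ _ _

lemma abs_apply_le_sum_of_abs_apply_single_le {n : ℕ} (L : (Fin n → ℝ) →L[ℝ] ℝ) {C : ℝ}
    (hL : ∀ j, |L (Pi.single j 1)| ≤ C) (v : Fin n → ℝ) : |L v| ≤ ∑ j, C * |v j| := by
  calc |L v| = |∑ j, v j * L (Pi.single j 1)| := by
        conv_lhs => rw [pi_eq_sum_univ' v]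
        simp only [map_sum, map_smul, smul_eq_mul]
    _ ≤ ∑ j, |v j * L (Pi.single j 1)| := abs_sum_le_sum_abs _ _
    _ ≤ ∑ j, C * |v j| := sum_le_sum fun j _ ↦ by
        rw [abs_mul, mul_comm]
        exact mul_le_mul_of_nonneg_right (hL j) (abs_nonneg _)

lemma abs_sub_le_sum_of_abs_fderiv_single_le {n : ℕ} {f : (Fin n → ℝ) → ℝ}
    (hf : Differentiable ℝ f) {C : ℝ} (hC : ∀ j x, |fderiv ℝ f x (Pi.single j 1)| ≤ C)
    (x y : Fin n → ℝ) : |f y - f x| ≤ ∑ j, C * |y j - x j| := by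
  have hγ : ∀ t : ℝ, HasDerivAt (fun t : ℝ ↦ x + t • (y - x)) (y - x) t := fun t ↦ by
    simpa using ((hasDerivAt_id t).smul_const (y - x)).const_add x
  have hderiv : ∀ t : ℝ, HasDerivAt (fun t : ℝ ↦ f (x + t • (y - x)))
      (fderiv ℝ f (x + t • (y - x)) (y - x)) t := fun t ↦
    (hf _).hasFDerivAt.comp_hasDerivAt t (hγ t)
  simpa using norm_image_sub_le_of_norm_deriv_le_segment' (fun t _ ↦ (hderiv t).hasDerivWithinAt)
    (fun t _ ↦ abs_apply_le_sum_of_abs_apply_single_le _ (fun j ↦ hC j _) (y - x)) 1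
    (Set.right_mem_Icc.mpr zero_le_one)

/-- The quasi-interpolant `(f * gₙ)_k(x) = ∑_{i ∈ Z_kⁿ} f(i/k) gₙ(kx - i)`. -/
noncomputable def tentInterpolant {n : ℕ} (k : ℕ) (f : (Fin n → ℝ) → ℝ) (x : Fin n → ℝ) : ℝ :=
  ∑ i ∈ Fintype.piFinset (fun _ : Fin n ↦ Icc (-(k : ℤ)) k),
    f (fun j ↦ (i j : ℝ) / k) * gn (fun j ↦ k * x j - i j)

lemma abs_sub_tentInterpolant_le {n k : ℕ} (hk : 1 ≤ k) {f : (Fin n → ℝ) → ℝ}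
    (hf : Differentiable ℝ f) {C : ℝ} (hC : ∀ j x, |fderiv ℝ f x (Pi.single j 1)| ≤ C)
    {x : Fin n → ℝ} (hx : x ∈ Set.Icc 0 1) :
    |f x - tentInterpolant k f x| ≤ C * n / (2 * k) := by
  set S := Fintype.piFinset (fun _ : Fin n ↦ Icc (-(k : ℤ)) k)
  have hsplit : f x - tentInterpolant k f x =
      ∑ i ∈ S, (f x - f (fun j ↦ (i j : ℝ) / k)) * gn (fun j ↦ k * x j - i j) := by
    simp only [tentInterpolant, S, sub_mul, sum_sub_distrib, ← mul_sum, sum_gn_eq_one hk hx,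
      mul_one]
  calc |f x - tentInterpolant k f x|
      ≤ ∑ i ∈ S, |f x - f (fun j ↦ (i j : ℝ) / k)| * gn (fun j ↦ k * x j - i j) := by
        rw [hsplit]
        refine (abs_sum_le_sum_abs _ _).trans_eq (sum_congr rfl fun i _ ↦ ?_)
        rw [abs_mul, abs_of_nonneg (gn_nonneg _)]
    _ ≤ ∑ i ∈ S, (∑ j, C * |x j - i j / k|) * gn (fun j ↦ k * x j - i j) := by
        gcongr with i
        · exact gn_nonneg _
        · exact abs_sub_le_sum_of_abs_fderiv_single_le hf hC _ _
    _ = ∑ j, C * ∑ i ∈ S, gn (fun l ↦ k * x l - i l) * |x j - i j / k| := by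
        simp only [sum_mul, mul_sum]
        rw [sum_comm]
        exact sum_congr rfl fun _ _ ↦ sum_congr rfl fun _ _ ↦ by ring
    _ ≤ ∑ _j : Fin n, C * (1 / (2 * k)) := by
        gcongr with j
        · exact (abs_nonneg _).trans (hC j x)
        · exact sum_gn_mul_abs_sub_le hk hx j
    _ = C * n / (2 * k) := by
        rw [sum_const, card_univ, Fintype.card_fin, nsmul_eq_mul]
        ring

lemma card_piFinset_Icc_neg (n k : ℕ) :
    #(Fintype.piFinset (fun _ : Fin n ↦ Icc (-(k : ℤ)) k)) = (2 * k + 1) ^ n := by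
  rw [Fintype.card_piFinset, prod_const, card_univ, Fintype.card_fin, Int.card_Icc]
  congr 1
  omega

lemma abs_tentInterpolant_sub_sum_le {n k : ℕ} {f : (Fin n → ℝ) → ℝ} {B : ℝ}
    (hB : ∀ x, |f x| ≤ B) {ε : ℝ} {x : Fin n → ℝ}
    {A : (Fin n → ℤ) → (Fin n → ℝ) → ℝ}
    (hA : ∀ i ∈ Fintype.piFinset (fun _ : Fin n ↦ Icc (-(k : ℤ)) k),
      |A i x - gn (fun j ↦ k * x j - i j)| ≤ ε) :
    |tentInterpolant k f x - ∑ i ∈ Fintype.piFinset (fun _ : Fin n ↦ Icc (-(k : ℤ)) k),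
        f (fun j ↦ (i j : ℝ) / k) * A i x| ≤ B * (2 * k + 1) ^ n * ε := by
  rw [tentInterpolant, ← sum_sub_distrib]
  calc _ ≤ ∑ i ∈ Fintype.piFinset (fun _ : Fin n ↦ Icc (-(k : ℤ)) k), B * ε := by
        refine (abs_sum_le_sum_abs _ _).trans (sum_le_sum fun i hi ↦ ?_)
        rw [← mul_sub, abs_mul, abs_sub_comm]
        exact mul_le_mul (hB _) (hA i hi) (abs_nonneg _) ((abs_nonneg _).trans (hB 0))
    _ = B * (2 * k + 1) ^ n * ε := by
        rw [sum_const, card_piFinset_Icc_neg, nsmul_eq_mul]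
        push_cast
        ring

theorem error_chaining_general (n k : ℕ) (hk : 1 ≤ k) (ε : ℝ)
    (f : (Fin n → ℝ) → ℝ) (hf : ContDiff ℝ 1 f)
    (A : (Fin n → ℤ) → (Fin n → ℝ) → ℝ)
    (hA : ∀ i ∈ Fintype.piFinset (fun _ : Fin n => Finset.Icc (-(k : ℤ)) k),
      ∀ x ∈ Set.Icc (fun _ => (0 : ℝ)) (fun _ => 1),
        |A i x - gn (fun j => k * x j - i j)| ≤ ε)
    (B C : ℝ)
    (hB : ∀ x : Fin n → ℝ, |f x| ≤ B)
    (hC : ∀ (j : Fin n) (x : Fin n → ℝ), |fderiv ℝ f x (Pi.single j 1)| ≤ C) :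
    ∀ x ∈ Set.Icc (fun _ => (0 : ℝ)) (fun _ => 1),
      |f x - ∑ i ∈ Fintype.piFinset (fun _ : Fin n => Finset.Icc (-(k : ℤ)) k),
          f (fun j => (i j : ℝ) / k) * A i x|
        ≤ C * n / (2 * k) + B * (2 * k + 1) ^ n * ε := by
  intro x hx
  exact (abs_sub_le _ (tentInterpolant k f x) _).trans <| add_le_add
    (abs_sub_tentInterpolant_le hk (hf.differentiable one_ne_zero) hC hx)
    (abs_tentInterpolant_sub_sum_le hB fun i hi ↦ hA i hi x hx)

/-- **Error chaining in the proof of Theorem 2.** If `f ∈ C¹(ℝⁿ)` is supported in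
`[-1,1]ⁿ`, `B` bounds `|f|` on `ℝⁿ` (best such: `‖f‖_∞`), `C` bounds all partial
derivatives (best such: `max_j ‖∂ⱼf‖_∞`), and each `A_i` approximates `gₙ(kx - i)`
uniformly on `[0,1]ⁿ` within `ε`, then on `[0,1]ⁿ`,
`|f(x) - ∑_{i ∈ Z_kⁿ} f(i/k) A_i(x)| ≤ C·n/(2k) + B·(2k+1)ⁿ·ε`. -/
theorem error_chaining (n k : ℕ) (hn : 1 ≤ n) (hk : 1 ≤ k)
    (ε : ℝ) (hε : 0 ≤ ε)
    (f : (Fin n → ℝ) → ℝ) (hf : ContDiff ℝ 1 f)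
    (hsupp : Function.support f ⊆ Set.Icc (fun _ => (-1 : ℝ)) (fun _ => 1))
    (A : (Fin n → ℤ) → (Fin n → ℝ) → ℝ)
    (hA : ∀ i ∈ Fintype.piFinset (fun _ : Fin n => Finset.Icc (-(k : ℤ)) k),
      ∀ x ∈ Set.Icc (fun _ => (0 : ℝ)) (fun _ => 1),
        |A i x - gn (fun j => k * x j - i j)| ≤ ε)
    (B C : ℝ)
    (hB : ∀ x : Fin n → ℝ, |f x| ≤ B)
    (hC : ∀ (j : Fin n) (x : Fin n → ℝ), |fderiv ℝ f x (Pi.single j 1)| ≤ C) :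
    ∀ x ∈ Set.Icc (fun _ => (0 : ℝ)) (fun _ => 1),
      |f x - ∑ i ∈ Fintype.piFinset (fun _ : Fin n => Finset.Icc (-(k : ℤ)) k),
          f (fun j => (i j : ℝ) / k) * A i x|
        ≤ C * n / (2 * k) + B * (2 * k + 1) ^ n * ε :=
  error_chaining_general n k hk ε f hf A hA B C hB hC
end
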